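/- For p ∈ (0,1) let X_p and Y_p be independent random variables on ℤ, each with geometric pmf P(X_p = n) = p(1−p)^n for n ≥ 0. Then for every α ∈ (0,1)∪(1,∞), H_α(X_p − Y_p) − H_α(X_p) = (1−α)⁻¹ · log( (1 + (1−p)^α) / (2−p)^α ), and consequently lim_{p→0⁺} ( H_α(X_p − Y_p) − H_α(X_p) ) = log 2. -/

import Mathlib

open Real Filter

/-- Rényi entropy of order `α ∈ (0,1)∪(1,∞)` of a pmf on `ℤ`, natural logarithm. -/
noncomputable def renyiEnt (α : ℝ) (p : ℤ → ℝ) : ℝ :=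
  (1 - α)⁻¹ * Real.log (∑' n, p n ^ α)

/-- The geometric pmf on `ℤ` with parameter `p`:
`Z_p(n) = p(1−p)ⁿ` for `n ≥ 0` and `0` otherwise. -/
noncomputable def geomPMF (p : ℝ) : ℤ → ℝ :=
  fun n => if 0 ≤ n then p * (1 - p) ^ n.toNat else 0

/-- The pmf of `X − Y` for iid `X, Y` with pmf `p`. -/
noncomputable def diffPMF (p : ℤ → ℝ) : ℤ → ℝ :=
  fun k => ∑' n, p (k + n) * p n

/-! The difference of two iid geometric variables is two-sided geometric:
`P(X_p − Y_p = k) = p/(2−p) · (1−p)^|k|`. Hence both power sums `∑ q(n)^α` are geometric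
series in `(1−p)^α`; the factor `1 − (1−p)^α` cancels in their ratio, which leaves
`(1 + (1−p)^α) / (2−p)^α`. At `p = 0` this is `2^(1−α)`, so the gap tends to `log 2`. -/

open Topology

theorem tsum_int_eq_tsum_natCast {M : Type*} [AddCommMonoid M] [TopologicalSpace M]
    {f : ℤ → M} (hf : ∀ n < 0, f n = 0) : ∑' n, f n = ∑' n : ℕ, f n :=
  (Nat.cast_injective.tsum_eq fun n hn =>
    ⟨n.toNat, Int.toNat_of_nonneg (not_lt.1 fun h => hn (hf n h))⟩).symm

theorem tsum_pow_natAbs {Q : ℝ} (hQ0 : 0 ≤ Q) (hQ1 : Q < 1) :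
    ∑' k : ℤ, Q ^ k.natAbs = (1 + Q) / (1 - Q) := by
  have hnonneg : HasSum (fun n : ℕ => Q ^ (n : ℤ).natAbs) (1 - Q)⁻¹ := by
    simpa only [Int.natAbs_natCast] using hasSum_geometric_of_lt_one hQ0 hQ1
  have hneg : HasSum (fun n : ℕ => Q ^ (-((n : ℤ) + 1)).natAbs) (Q * (1 - Q)⁻¹) := by
    refine ((hasSum_geometric_of_lt_one hQ0 hQ1).mul_left Q).congr_fun fun n => ?_
    rw [show (-((n : ℤ) + 1)).natAbs = n + 1 by omega, pow_succ']
  rw [(HasSum.of_nat_of_neg_add_one (f := fun k : ℤ => Q ^ k.natAbs) hnonneg hneg).tsum_eq]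
  ring

theorem diffPMF_neg (f : ℤ → ℝ) (k : ℤ) : diffPMF f (-k) = diffPMF f k := by
  rw [diffPMF, diffPMF, ← (Equiv.addRight k).tsum_eq]
  congr 1 with n
  simp only [Equiv.coe_addRight]
  rw [show -k + (n + k) = n by ring, mul_comm, add_comm n k]

theorem geomPMF_natCast (p : ℝ) (n : ℕ) : geomPMF p n = p * (1 - p) ^ n := by
  simp [geomPMF]

theorem geomPMF_of_neg (p : ℝ) {n : ℤ} (hn : n < 0) : geomPMF p n = 0 :=
  if_neg hn.not_ge

variable {p : ℝ}

theorem diffPMF_geomPMF_natCast (hp0 : 0 < p) (hp1 : p < 1) (k : ℕ) :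
    diffPMF (geomPMF p) k = p / (2 - p) * (1 - p) ^ k := by
  have hterm : ∀ n : ℕ, geomPMF p (k + n) * geomPMF p n
      = p ^ 2 * (1 - p) ^ k * ((1 - p) ^ 2) ^ n := by
    intro n
    rw [← Nat.cast_add, geomPMF_natCast, geomPMF_natCast, ← pow_mul]
    ring
  have hratio : (1 - p) ^ 2 < 1 := by nlinarith
  rw [diffPMF, tsum_int_eq_tsum_natCast fun n hn => by simp [geomPMF_of_neg p hn],
    tsum_congr hterm, tsum_mul_left, tsum_geometric_of_lt_one (sq_nonneg _) hratio]
  have : (2 : ℝ) - p ≠ 0 := by linarith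
  rw [show 1 - (1 - p) ^ 2 = p * (2 - p) by ring]
  field_simp

theorem diffPMF_geomPMF (hp0 : 0 < p) (hp1 : p < 1) (k : ℤ) :
    diffPMF (geomPMF p) k = p / (2 - p) * (1 - p) ^ k.natAbs := by
  obtain ⟨m, rfl | rfl⟩ := Int.eq_nat_or_neg k
  · simpa using diffPMF_geomPMF_natCast hp0 hp1 m
  · simpa [diffPMF_neg] using diffPMF_geomPMF_natCast hp0 hp1 m

variable {α : ℝ}

theorem tsum_rpow_geomPMF (hp0 : 0 < p) (hp1 : p < 1) (hα : 0 < α) :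
    ∑' n, geomPMF p n ^ α = p ^ α / (1 - (1 - p) ^ α) := by
  have hterm : ∀ n : ℕ, geomPMF p n ^ α = p ^ α * ((1 - p) ^ α) ^ n := by
    intro n
    rw [geomPMF_natCast, mul_rpow hp0.le (by positivity), rpow_pow_comm (by linarith)]
  rw [tsum_int_eq_tsum_natCast fun n hn => by simp [geomPMF_of_neg p hn, zero_rpow hα.ne'],
    tsum_congr hterm, tsum_mul_left,
    tsum_geometric_of_lt_one (by positivity) (rpow_lt_one (by linarith) (by linarith) hα),
    div_eq_mul_inv]

theorem tsum_rpow_diffPMF_geomPMF (hp0 : 0 < p) (hp1 : p < 1) (hα : 0 < α) :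
    ∑' k, diffPMF (geomPMF p) k ^ α
      = (p / (2 - p)) ^ α * ((1 + (1 - p) ^ α) / (1 - (1 - p) ^ α)) := by
  have hterm : ∀ k : ℤ,
      diffPMF (geomPMF p) k ^ α = (p / (2 - p)) ^ α * ((1 - p) ^ α) ^ k.natAbs := by
    intro k
    rw [diffPMF_geomPMF hp0 hp1, mul_rpow (div_nonneg hp0.le (by linarith)) (by positivity),
      rpow_pow_comm (by linarith)]
  rw [tsum_congr hterm, tsum_mul_left,
    tsum_pow_natAbs (by positivity) (rpow_lt_one (by linarith) (by linarith) hα)]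

theorem renyiEnt_diffPMF_geomPMF_sub (hp0 : 0 < p) (hp1 : p < 1) (hα : 0 < α) :
    renyiEnt α (diffPMF (geomPMF p)) - renyiEnt α (geomPMF p) =
      (1 - α)⁻¹ * log ((1 + (1 - p) ^ α) / (2 - p) ^ α) := by
  have hQ1 : 0 < 1 - (1 - p) ^ α := sub_pos.2 (rpow_lt_one (by linarith) (by linarith) hα)
  have h2p : 0 < 2 - p := by linarith
  rw [renyiEnt, renyiEnt, tsum_rpow_diffPMF_geomPMF hp0 hp1 hα, tsum_rpow_geomPMF hp0 hp1 hα,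
    ← mul_sub, ← log_div (by positivity) (by positivity), div_rpow hp0.le h2p.le]
  congr 2
  field_simp

theorem tendsto_renyiGap (hα1 : α ≠ 1) :
    Tendsto (fun p : ℝ => (1 - α)⁻¹ * log ((1 + (1 - p) ^ α) / (2 - p) ^ α)) (𝓝 0)
      (𝓝 (log 2)) := by
  have hcont :
      ContinuousAt (fun p : ℝ => (1 - α)⁻¹ * log ((1 + (1 - p) ^ α) / (2 - p) ^ α)) 0 := by
    refine continuousAt_const.mul
      (ContinuousAt.log ?_ (by simp [(rpow_pos_of_pos two_pos α).ne']))
    exact (continuousAt_const.add ((continuousAt_const.sub continuousAt_id).rpow_const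
      (Or.inl (by norm_num)))).div ((continuousAt_const.sub continuousAt_id).rpow_const
      (Or.inl (by norm_num))) (by positivity)
  convert hcont.tendsto using 2
  have : (1 : ℝ) - α ≠ 0 := sub_ne_zero.2 hα1.symm
  rw [sub_zero, sub_zero, one_rpow, one_add_one_eq_two, log_div two_ne_zero (by positivity),
    log_rpow two_pos]
  field_simp

/-- For iid geometric `X_p, Y_p` and `α ∈ (0,1)∪(1,∞)`:
`H_α(X_p−Y_p) − H_α(X_p) = (1−α)⁻¹ log((1+(1−p)^α)/(2−p)^α)`, and this gap tends to
`log 2` as `p → 0⁺`. -/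
theorem geometric_difference_renyi_gap (α : ℝ) (hα : 0 < α) (hα1 : α ≠ 1) :
    (∀ p ∈ Set.Ioo (0 : ℝ) 1,
      renyiEnt α (diffPMF (geomPMF p)) - renyiEnt α (geomPMF p) =
        (1 - α)⁻¹ * Real.log ((1 + (1 - p) ^ α) / (2 - p) ^ α)) ∧
    Tendsto (fun p : ℝ => renyiEnt α (diffPMF (geomPMF p)) - renyiEnt α (geomPMF p))
      (nhdsWithin 0 (Set.Ioi 0)) (nhds (Real.log 2)) := by
  have hgap : ∀ p ∈ Set.Ioo (0 : ℝ) 1,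
      renyiEnt α (diffPMF (geomPMF p)) - renyiEnt α (geomPMF p) =
        (1 - α)⁻¹ * log ((1 + (1 - p) ^ α) / (2 - p) ^ α) :=
    fun p hp => renyiEnt_diffPMF_geomPMF_sub hp.1 hp.2 hα
  refine ⟨hgap, ((tendsto_renyiGap hα1).mono_left nhdsWithin_le_nhds).congr' ?_⟩
  filter_upwards [Ioo_mem_nhdsGT (zero_lt_one' ℝ)] with p hp
  exact (hgap p hp).symm
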